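/- Inversion theorem for the splitting rule with the canonical Möbius function: let X be a poset with a least element in which every principal ideal {y : y ≤ x} is finite, and let g : X → L be such that |g| is isotone (y ≤ x implies |g(y)| ≤ |g(x)|) and sign-coherent on comparable pairs (for all y ≤ x, |g(y)| = |g(x)| implies g(y) = g(x)). Define the canonical Möbius transform f(x) := ⟨⊻ ({g(x)} + {−g(y) : y ⋖ x})⟩₋⁺. Then f solves the inversion equation: for every x ∈ X, ⟨⊻ {f(y) : y ≤ x}⟩₋⁺ = g(x). -/

import Mathlib

/-- The symmetric maximum on a linear order `L` with negation `neg` and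
distinguished element `zero`; `max x (neg x)` plays the role of `|x|`. -/
def symMax {L : Type*} [LinearOrder L] (neg : L → L) (zero : L) (a b : L) : L :=
  if b = neg a then zero
  else if max (max a (neg a)) (max b (neg b)) = neg a ∨
          max (max a (neg a)) (max b (neg b)) = neg b then
    neg (max (max a (neg a)) (max b (neg b)))
  else max (max a (neg a)) (max b (neg b))

/-- The symmetric minimum on a linear order `L` with negation `neg` and
distinguished element `zero`. -/
def symMin {L : Type*} [LinearOrder L] (neg : L → L) (zero : L) (a b : L) : L :=
  if (a < zero ∧ zero < b) ∨ (b < zero ∧ zero < a) then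
    neg (min (max a (neg a)) (max b (neg b)))
  else min (max a (neg a)) (max b (neg b))

/-- The splitting-rule evaluation `⟨⊻ s⟩₋⁺` of a finite multiset `s`:
the symmetric maximum of the max of the nonnegative terms (`zero` if none)
and the min of the negative terms (`zero` if none). -/
def splitEval {L : Type*} [LinearOrder L] (neg : L → L) (zero : L) (s : Multiset L) : L :=
  symMax neg zero ((s.filter (fun x => zero ≤ x)).fold max zero)
    ((s.filter (fun x => x < zero)).fold min zero)

/-!
The splitting rule returns `c` whenever `c ∈ s` and every other element of `s` has strictly
smaller absolute value, and returns `0` whenever `s` contains both `c` and `−c` with `|c|`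
maximal. Applied to `{g x} + {−g y : y ⋖ x}`, isotony and sign-coherence of `g` give
`f x = g x` when no lower cover `y` of `x` has `|g y| = |g x|`, and `f x = 0` otherwise.
So below `x` every `f y` is `0` or `g y`, and for `y` minimal below `x` with `|g y| = |g x|`
we get `f y = g x`: thus `g x` dominates `{f y : y ≤ x}` and the splitting rule returns it.
-/

namespace Multiset

variable {L : Type*} [LinearOrder L] {s : Multiset L} {a b c : L}

theorem fold_max_le_iff : s.fold max b ≤ c ↔ b ≤ c ∧ ∀ a ∈ s, a ≤ c := by
  induction s using Multiset.induction_on with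
  | empty => simp
  | cons a s ih =>
    simp only [fold_cons_left, sup_le_iff, ih, mem_cons, forall_eq_or_imp]
    tauto

theorem fold_max_lt_iff : s.fold max b < c ↔ b < c ∧ ∀ a ∈ s, a < c := by
  induction s using Multiset.induction_on with
  | empty => simp
  | cons a s ih =>
    simp only [fold_cons_left, sup_lt_iff, ih, mem_cons, forall_eq_or_imp]
    tauto

theorem le_fold_min_iff : c ≤ s.fold min b ↔ c ≤ b ∧ ∀ a ∈ s, c ≤ a :=
  fold_max_le_iff (L := Lᵒᵈ)

theorem lt_fold_min_iff : c < s.fold min b ↔ c < b ∧ ∀ a ∈ s, c < a :=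
  fold_max_lt_iff (L := Lᵒᵈ)

end Multiset

section Split

variable {L : Type*} [LinearOrder L] {neg : L → L} {zero : L} {s : Multiset L} {a c : L}

-- The `p` and `q` of the splitting rule `⟨⊻ s⟩₋⁺ = p ⊻ q`.
def splitPos (zero : L) (s : Multiset L) : L := (s.filter (fun x => zero ≤ x)).fold max zero

def splitNeg (zero : L) (s : Multiset L) : L := (s.filter (fun x => x < zero)).fold min zero

theorem splitEval_eq_symMax (neg : L → L) (zero : L) (s : Multiset L) :
    splitEval neg zero s = symMax neg zero (splitPos zero s) (splitNeg zero s) := rfl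

theorem splitPos_le_iff : splitPos zero s ≤ c ↔ zero ≤ c ∧ ∀ a ∈ s, zero ≤ a → a ≤ c := by
  simp [splitPos, Multiset.fold_max_le_iff]

theorem splitPos_lt_iff : splitPos zero s < c ↔ zero < c ∧ ∀ a ∈ s, zero ≤ a → a < c := by
  simp [splitPos, Multiset.fold_max_lt_iff]

theorem le_splitNeg_iff : c ≤ splitNeg zero s ↔ c ≤ zero ∧ ∀ a ∈ s, a < zero → c ≤ a := by
  simp [splitNeg, Multiset.le_fold_min_iff]

theorem lt_splitNeg_iff : c < splitNeg zero s ↔ c < zero ∧ ∀ a ∈ s, a < zero → c < a := by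
  simp [splitNeg, Multiset.lt_fold_min_iff]

theorem le_splitPos (ha : a ∈ s) (h : zero ≤ a) : a ≤ splitPos zero s :=
  (splitPos_le_iff.1 le_rfl).2 a ha h

theorem splitNeg_le (ha : a ∈ s) (h : a < zero) : splitNeg zero s ≤ a :=
  (le_splitNeg_iff.1 le_rfl).2 a ha h

theorem splitNeg_le_zero : splitNeg zero s ≤ zero :=
  (le_splitNeg_iff.1 le_rfl).1

theorem zero_le_splitPos : zero ≤ splitPos zero s :=
  le_of_not_gt fun h => (splitPos_lt_iff.1 h).1.false

theorem splitPos_eq (hc : c ∈ s) (hc0 : zero ≤ c) (h : ∀ a ∈ s, max a (neg a) ≤ c) :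
    splitPos zero s = c :=
  le_antisymm (splitPos_le_iff.2 ⟨hc0, fun a ha _ => (le_max_left _ _).trans (h a ha)⟩)
    (le_splitPos hc hc0)

theorem symMax_self_neg (a : L) : symMax neg zero a (neg a) = zero := by
  simp [symMax]

end Split

structure IsNegation {L : Type*} [LinearOrder L] (neg : L → L) (zero : L) : Prop where
  neg_neg : ∀ x, neg (neg x) = x
  le_iff_neg_le_neg : ∀ x y, x ≤ y ↔ neg y ≤ neg x
  neg_zero : neg zero = zero

namespace IsNegation

variable {L : Type*} [LinearOrder L] {neg : L → L} {zero : L} {s : Multiset L} {a b c p q : L}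

theorem neg_le_neg_iff (hn : IsNegation neg zero) : neg a ≤ neg b ↔ b ≤ a :=
  (hn.le_iff_neg_le_neg b a).symm

theorem neg_lt_neg_iff (hn : IsNegation neg zero) : neg a < neg b ↔ b < a := by
  simp only [lt_iff_not_ge, hn.neg_le_neg_iff]

theorem neg_nonneg_iff (hn : IsNegation neg zero) : zero ≤ neg a ↔ a ≤ zero := by
  simpa only [hn.neg_zero] using hn.neg_le_neg_iff (a := zero) (b := a)

theorem neg_nonpos_iff (hn : IsNegation neg zero) : neg a ≤ zero ↔ zero ≤ a := by
  simpa only [hn.neg_zero] using hn.neg_le_neg_iff (a := a) (b := zero)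

theorem neg_pos_iff (hn : IsNegation neg zero) : zero < neg a ↔ a < zero := by
  simp only [lt_iff_not_ge, hn.neg_nonpos_iff]

theorem neg_lt_zero_iff (hn : IsNegation neg zero) : neg a < zero ↔ zero < a := by
  simp only [lt_iff_not_ge, hn.neg_nonneg_iff]

theorem abs_of_nonneg (hn : IsNegation neg zero) (h : zero ≤ a) : max a (neg a) = a :=
  max_eq_left ((hn.neg_nonpos_iff.2 h).trans h)

theorem abs_of_nonpos (hn : IsNegation neg zero) (h : a ≤ zero) : max a (neg a) = neg a :=
  max_eq_right (h.trans (hn.neg_nonneg_iff.2 h))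

theorem abs_neg (hn : IsNegation neg zero) (a : L) :
    max (neg a) (neg (neg a)) = max a (neg a) := by
  rw [hn.neg_neg, max_comm]

theorem abs_zero (hn : IsNegation neg zero) : max zero (neg zero) = zero := by
  rw [hn.neg_zero, max_self]

theorem eq_zero_of_abs_le (hn : IsNegation neg zero) (h : max a (neg a) ≤ zero) : a = zero :=
  le_antisymm ((le_max_left _ _).trans h) (hn.neg_nonpos_iff.1 ((le_max_right _ _).trans h))

theorem abs_pos (hn : IsNegation neg zero) (h : a ≠ zero) : zero < max a (neg a) :=
  lt_of_not_ge fun h' => h (hn.eq_zero_of_abs_le h')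

theorem symMax_of_neg_lt (hn : IsNegation neg zero) (hp : zero ≤ p) (hq : q ≤ zero)
    (h : neg q < p) : symMax neg zero p q = p := by
  have hq' : zero ≤ neg q := hn.neg_nonneg_iff.2 hq
  have hp_ne : p ≠ neg p := fun he =>
    (h.trans_le (he ▸ hn.neg_nonpos_iff.2 hp)).not_ge hq'
  have hq_ne : q ≠ neg p := fun he => h.ne (by rw [he, hn.neg_neg])
  simp only [symMax, hn.abs_of_nonneg hp, hn.abs_of_nonpos hq, max_eq_left h.le, hq_ne, hp_ne,
    h.ne', or_self, if_false]

theorem symMax_of_lt_neg (hn : IsNegation neg zero) (hp : zero ≤ p) (hq : q ≤ zero)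
    (h : p < neg q) : symMax neg zero p q = q := by
  have hq_ne : q ≠ neg p := fun he => h.ne' (by rw [he, hn.neg_neg])
  simp only [symMax, hn.abs_of_nonneg hp, hn.abs_of_nonpos hq, max_eq_right h.le, hq_ne,
    or_true, if_true, if_false, hn.neg_neg]

theorem splitNeg_eq (hn : IsNegation neg zero) (hc : c ∈ s) (hc0 : c ≤ zero)
    (h : ∀ a ∈ s, max a (neg a) ≤ neg c) : splitNeg zero s = c := by
  refine le_antisymm ?_ (le_splitNeg_iff.2 ⟨hc0, fun a ha _ =>
    hn.neg_le_neg_iff.1 ((le_max_right _ _).trans (h a ha))⟩)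
  rcases hc0.lt_or_eq with hc0 | rfl
  · exact splitNeg_le hc hc0
  · exact splitNeg_le_zero

theorem splitEval_eq_of_forall_abs_lt (hn : IsNegation neg zero) (hc : c ∈ s)
    (h : ∀ a ∈ s, a ≠ c → max a (neg a) < max c (neg c)) : splitEval neg zero s = c := by
  have hle : ∀ a ∈ s, max a (neg a) ≤ max c (neg c) := fun a ha =>
    (eq_or_ne a c).elim (fun e => e ▸ le_rfl) fun hne => (h a ha hne).le
  rw [splitEval_eq_symMax]
  rcases lt_trichotomy zero c with hc0 | rfl | hc0
  · rw [hn.abs_of_nonneg hc0.le] at h hle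
    have hQ : neg c < splitNeg zero s := lt_splitNeg_iff.2 ⟨hn.neg_lt_zero_iff.2 hc0,
      fun a ha ha0 => by
        simpa only [hn.neg_neg] using hn.neg_lt_neg_iff.2
          ((le_max_right _ _).trans_lt (h a ha (ha0.trans hc0).ne))⟩
    rw [splitPos_eq hc hc0.le hle]
    exact hn.symMax_of_neg_lt hc0.le splitNeg_le_zero
      (by simpa only [hn.neg_neg] using hn.neg_lt_neg_iff.2 hQ)
  · rw [hn.abs_zero] at hle
    rw [splitPos_eq hc le_rfl hle, hn.splitNeg_eq hc le_rfl (by rwa [hn.neg_zero])]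
    simpa only [hn.neg_zero] using symMax_self_neg (neg := neg) zero
  · rw [hn.abs_of_nonpos hc0.le] at h hle
    have hP : splitPos zero s < neg c := splitPos_lt_iff.2 ⟨hn.neg_pos_iff.2 hc0,
      fun a ha ha0 => (le_max_left _ _).trans_lt (h a ha (hc0.trans_le ha0).ne')⟩
    rw [hn.splitNeg_eq hc hc0.le hle]
    exact hn.symMax_of_lt_neg zero_le_splitPos hc0.le hP

theorem splitEval_eq_zero_of_mem_of_neg_mem (hn : IsNegation neg zero) (hc : c ∈ s)
    (hc' : neg c ∈ s) (h : ∀ a ∈ s, max a (neg a) ≤ max c (neg c)) :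
    splitEval neg zero s = zero := by
  wlog hc0 : zero ≤ c generalizing c
  · exact this hc' (by rwa [hn.neg_neg]) (by rwa [hn.abs_neg])
      (hn.neg_nonneg_iff.2 (le_of_not_ge hc0))
  rw [hn.abs_of_nonneg hc0] at h
  rw [splitEval_eq_symMax, splitPos_eq hc hc0 h,
    hn.splitNeg_eq hc' (hn.neg_nonpos_iff.2 hc0) (by rwa [hn.neg_neg]), symMax_self_neg]

end IsNegation

section Mobius

variable {L : Type*} [LinearOrder L] {neg : L → L} {zero : L} {X : Type*} [PartialOrder X]
  {hcov : ∀ x : X, {y | y ⋖ x}.Finite} {g f : X → L}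

theorem mobius_eq_self_of_forall_covBy (hn : IsNegation neg zero)
    (habs : ∀ y x : X, y ≤ x → max (g y) (neg (g y)) ≤ max (g x) (neg (g x)))
    (hf : ∀ x, f x = splitEval neg zero
      (g x ::ₘ (hcov x).toFinset.val.map (fun y => neg (g y))))
    {y : X} (h : ∀ z, z ⋖ y → max (g z) (neg (g z)) ≠ max (g y) (neg (g y))) :
    f y = g y := by
  rw [hf y]
  refine hn.splitEval_eq_of_forall_abs_lt (Multiset.mem_cons_self _ _) fun a ha hne => ?_
  obtain ⟨z, hz, rfl⟩ : ∃ z, z ⋖ y ∧ neg (g z) = a := by simpa [hne] using ha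
  rw [hn.abs_neg]
  exact (habs z y hz.le).lt_of_ne (h z hz)

theorem mobius_eq_zero_of_covBy (hn : IsNegation neg zero)
    (habs : ∀ y x : X, y ≤ x → max (g y) (neg (g y)) ≤ max (g x) (neg (g x)))
    (hsign : ∀ y x : X, y ≤ x →
      max (g y) (neg (g y)) = max (g x) (neg (g x)) → g y = g x)
    (hf : ∀ x, f x = splitEval neg zero
      (g x ::ₘ (hcov x).toFinset.val.map (fun y => neg (g y))))
    {y z : X} (hz : z ⋖ y) (h : max (g z) (neg (g z)) = max (g y) (neg (g y))) :
    f y = zero := by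
  rw [hf y]
  refine hn.splitEval_eq_zero_of_mem_of_neg_mem (Multiset.mem_cons_self _ _) ?_ fun a ha => ?_
  · simpa using Or.inr ⟨z, hz, by rw [hsign z y hz.le h]⟩
  · obtain rfl | ⟨w, hw, rfl⟩ : a = g y ∨ ∃ w, w ⋖ y ∧ neg (g w) = a := by simpa using ha
    · exact le_rfl
    · rw [hn.abs_neg]
      exact habs w y hw.le

theorem mobius_eq_self_or_eq_zero (hn : IsNegation neg zero)
    (habs : ∀ y x : X, y ≤ x → max (g y) (neg (g y)) ≤ max (g x) (neg (g x)))
    (hsign : ∀ y x : X, y ≤ x →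
      max (g y) (neg (g y)) = max (g x) (neg (g x)) → g y = g x)
    (hf : ∀ x, f x = splitEval neg zero
      (g x ::ₘ (hcov x).toFinset.val.map (fun y => neg (g y))))
    (y : X) : f y = g y ∨ f y = zero := by
  by_cases h : ∃ z, z ⋖ y ∧ max (g z) (neg (g z)) = max (g y) (neg (g y))
  · obtain ⟨z, hz, he⟩ := h
    exact Or.inr (mobius_eq_zero_of_covBy hn habs hsign hf hz he)
  · exact Or.inl (mobius_eq_self_of_forall_covBy hn habs hf fun z hz he => h ⟨z, hz, he⟩)

theorem exists_le_mobius_eq (hn : IsNegation neg zero)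
    (hfin : ∀ x : X, {y | y ≤ x}.Finite)
    (habs : ∀ y x : X, y ≤ x → max (g y) (neg (g y)) ≤ max (g x) (neg (g x)))
    (hsign : ∀ y x : X, y ≤ x →
      max (g y) (neg (g y)) = max (g x) (neg (g x)) → g y = g x)
    (hf : ∀ x, f x = splitEval neg zero
      (g x ::ₘ (hcov x).toFinset.val.map (fun y => neg (g y))))
    (x : X) : ∃ y ≤ x, f y = g x := by
  let S := {y | y ≤ x ∧ max (g y) (neg (g y)) = max (g x) (neg (g x))}
  obtain ⟨y, hyx, hmin⟩ :=
    ((hfin x).subset fun y (hy : y ∈ S) => hy.1).exists_le_minimal (a := x) ⟨le_rfl, rfl⟩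
  have hy : max (g y) (neg (g y)) = max (g x) (neg (g x)) := hmin.prop.2
  refine ⟨y, hyx, ?_⟩
  rw [mobius_eq_self_of_forall_covBy hn habs hf fun z hz he =>
    hmin.not_lt ⟨hz.le.trans hyx, he.trans hy⟩ hz.lt, hsign y x hyx hy]

end Mobius

theorem canonical_mobius_transform_inverts_general {L : Type*} [LinearOrder L]
    (neg : L → L) (zero : L)
    (hinv : ∀ x, neg (neg x) = x)
    (hord : ∀ x y, x ≤ y ↔ neg y ≤ neg x)
    (hzero : neg zero = zero)
    {X : Type*} [PartialOrder X]
    (hfin : ∀ x : X, {y | y ≤ x}.Finite)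
    (hcov : ∀ x : X, {y | y ⋖ x}.Finite)
    (g f : X → L)
    (habs : ∀ y x : X, y ≤ x → max (g y) (neg (g y)) ≤ max (g x) (neg (g x)))
    (hsign : ∀ y x : X, y ≤ x →
      max (g y) (neg (g y)) = max (g x) (neg (g x)) → g y = g x)
    (hf : ∀ x, f x = splitEval neg zero
      (g x ::ₘ (hcov x).toFinset.val.map (fun y => neg (g y)))) :
    ∀ x : X, splitEval neg zero ((hfin x).toFinset.val.map f) = g x := by
  intro x
  have hn : IsNegation neg zero := ⟨hinv, hord, hzero⟩
  obtain ⟨y₀, hy₀x, hfy₀⟩ := exists_le_mobius_eq hn hfin habs hsign hf x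
  refine hn.splitEval_eq_of_forall_abs_lt (Multiset.mem_map.2 ⟨y₀, by simpa using hy₀x, hfy₀⟩)
    fun a ha hne => ?_
  obtain ⟨y, hyx, rfl⟩ : ∃ y, y ≤ x ∧ f y = a := by simpa using ha
  rcases mobius_eq_self_or_eq_zero hn habs hsign hf y with h | h
  · rw [h] at hne ⊢
    exact (habs y x hyx).lt_of_ne fun he => hne (hsign y x hyx he)
  · rw [h, hn.abs_zero]
    exact hn.abs_pos (h ▸ hne).symm

/-- inversion theorem for the splitting rule with the canonical
Möbius transform: if `|g|` is isotone and `g` is sign-coherent on comparable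
pairs, then `f x = ⟨⊻ ({g x} + {−g y : y ⋖ x})⟩₋⁺` satisfies
`⟨⊻_{y ≤ x} f y⟩₋⁺ = g x` for every `x`.  Here `|x| = max x (neg x)`. -/
theorem canonical_mobius_transform_inverts {L : Type*} [LinearOrder L]
    (neg : L → L) (zero : L)
    (hinv : ∀ x, neg (neg x) = x)
    (hord : ∀ x y, x ≤ y ↔ neg y ≤ neg x)
    (hzero : neg zero = zero)
    {X : Type*} [PartialOrder X] [OrderBot X]
    (hfin : ∀ x : X, {y | y ≤ x}.Finite)
    (hcov : ∀ x : X, {y | y ⋖ x}.Finite)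
    (g f : X → L)
    (habs : ∀ y x : X, y ≤ x → max (g y) (neg (g y)) ≤ max (g x) (neg (g x)))
    (hsign : ∀ y x : X, y ≤ x →
      max (g y) (neg (g y)) = max (g x) (neg (g x)) → g y = g x)
    (hf : ∀ x, f x = splitEval neg zero
      (g x ::ₘ (hcov x).toFinset.val.map (fun y => neg (g y)))) :
    ∀ x : X, splitEval neg zero ((hfin x).toFinset.val.map f) = g x :=
  canonical_mobius_transform_inverts_general neg zero hinv hord hzero hfin hcov g f habs hsign hf
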